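/- arXiv:2511.18291 — 2 statements merged into one kernel-verified Lean document; each statement's English description precedes it below -/
import Mathlib

section
/- Let H_A and H_B be real inner product spaces, N ≥ 1, and let L_1,…,L_N : H_A × H_B → ℝ be differentiable with L_g-Lipschitz gradients, and set L = (1/N)·Σ_{i=1}^N L_i. Assume that for every fixed a ∈ H_A the map b ↦ L(a,b) has an L-Lipschitz gradient, and let 0 < η ≤ 1/L. Let (a_1,b_1),…,(a_N,b_N) ∈ H_A × H_B be local client states with averages ā = (1/N)·Σ_i a_i and b̄ = (1/N)·Σ_i b_i, and let g = (1/N)·Σ_{i=1}^N ∇_b L_i(a_i, b_i) be the averaged local partial gradient with respect to the second block. Then L(ā, b̄ − η·g) ≤ L(ā, b̄) − (η/2)·‖∇_b L(ā, b̄)‖² + (η·L_g²/(2N))·Σ_{i=1}^N ‖(a_i,b_i) − (ā,b̄)‖². (Paper's Lemma 2, descent with consensus error, with the explicit constant C = η·L_g²/(2N).) -/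
open scoped BigOperators RealInnerProductSpace


/-- Quadratic upper bound (descent lemma) for a function with Lipschitz gradient. -/
lemma descent_aux {HB : Type*} [NormedAddCommGroup HB] [InnerProductSpace ℝ HB]
    (f : HB → ℝ) (G : HB → HB)
    (hf : ∀ y, HasFDerivAt f (innerSL ℝ (G y)) y)
    {Lsm : ℝ} (hlip : ∀ y y', ‖G y - G y'‖ ≤ Lsm * ‖y - y'‖)
    (x v : HB) :
    f (x + v) ≤ f x + ⟪G x, v⟫ + Lsm / 2 * ‖v‖ ^ 2 := by
  set χ : ℝ → ℝ := fun t => f (x + t • v) - t * ⟪G x, v⟫ - Lsm / 2 * ‖v‖ ^ 2 * t ^ 2 with hχ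
  have hderiv : ∀ t : ℝ, HasDerivAt χ
      (⟪G (x + t • v), v⟫ - ⟪G x, v⟫ - Lsm / 2 * ‖v‖ ^ 2 * (2 * t)) t := by
    intro t
    have hline : HasDerivAt (fun t : ℝ => x + t • v) v t := by
      simpa using ((hasDerivAt_id t).smul_const v).const_add x
    have h1 : HasDerivAt (fun t : ℝ => f (x + t • v)) (innerSL ℝ (G (x + t • v)) v) t :=
      (hf (x + t • v)).comp_hasDerivAt t hline
    have h2 : HasDerivAt (fun t : ℝ => t * ⟪G x, v⟫) ⟪G x, v⟫ t :=
      hasDerivAt_mul_const _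
    have h3 : HasDerivAt (fun t : ℝ => Lsm / 2 * ‖v‖ ^ 2 * t ^ 2)
        (Lsm / 2 * ‖v‖ ^ 2 * (2 * t)) t := by
      simpa using (hasDerivAt_pow 2 t).const_mul (Lsm / 2 * ‖v‖ ^ 2)
    simpa [hχ, innerSL_apply_apply] using (h1.fun_sub h2).fun_sub h3
  have hanti : AntitoneOn χ (Set.Icc (0 : ℝ) 1) := by
    apply antitoneOn_of_hasDerivWithinAt_nonpos (convex_Icc 0 1)
      (fun t _ => (hderiv t).continuousAt.continuousWithinAt)
      (fun t ht => (hderiv t).hasDerivWithinAt)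
    intro t ht
    rw [interior_Icc] at ht
    have ht0 : 0 < t := ht.1
    have key : ⟪G (x + t • v) - G x, v⟫ ≤ Lsm * t * ‖v‖ ^ 2 := by
      calc ⟪G (x + t • v) - G x, v⟫ ≤ ‖G (x + t • v) - G x‖ * ‖v‖ := real_inner_le_norm _ _
        _ ≤ (Lsm * ‖(x + t • v) - x‖) * ‖v‖ := by
            apply mul_le_mul_of_nonneg_right (hlip _ _) (norm_nonneg v)
        _ = Lsm * t * ‖v‖ ^ 2 := by
            rw [add_sub_cancel_left, norm_smul, Real.norm_eq_abs, abs_of_pos ht0]; ring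
    have := inner_sub_left (𝕜 := ℝ) (G (x + t • v)) (G x) v
    nlinarith [this]
  have h01 := hanti (Set.left_mem_Icc.mpr zero_le_one) (Set.right_mem_Icc.mpr zero_le_one)
    zero_le_one
  simp only [hχ, one_smul, zero_smul, add_zero, zero_mul, one_mul, one_pow] at h01
  nlinarith [h01]

/-- Lemma 2 (descent with consensus error), with the explicit constant
`C = η·Lg²/(2N)`.  Each local loss `Li i : H_A × H_B → ℝ` is differentiable with
full gradient `(GAi i, GBi i)` that is `Lg`-Lipschitz for the ℓ² product norm;
the averaged loss `L(a,b) = (1/N)·Σᵢ Li i a b` has, for each fixed `a`, an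
`Lsm`-Lipschitz partial gradient `GB a` in `b`, and `0 < η ≤ 1/Lsm`.  Moving the
average of the `B` block by minus `η` times the averaged local partial gradient
`g = (1/N)·Σᵢ ∇_b Lᵢ(aᵢ,bᵢ)` decreases `L` up to the consensus error term. -/
theorem descent_with_consensus_error
    {HA HB : Type*} [NormedAddCommGroup HA] [InnerProductSpace ℝ HA]
    [NormedAddCommGroup HB] [InnerProductSpace ℝ HB]
    {N : ℕ} (hN : 1 ≤ N)
    (Li : Fin N → HA → HB → ℝ)
    (GAi : Fin N → HA → HB → HA) (GBi : Fin N → HA → HB → HB)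
    (hderiv : ∀ i a b, HasFDerivAt (fun p : HA × HB => Li i p.1 p.2)
      ((innerSL ℝ (GAi i a b)).comp (ContinuousLinearMap.fst ℝ HA HB) +
        (innerSL ℝ (GBi i a b)).comp (ContinuousLinearMap.snd ℝ HA HB)) (a, b))
    {Lg : ℝ} (hLg : 0 ≤ Lg)
    (hlip : ∀ i a b a' b',
      ‖GAi i a b - GAi i a' b'‖ ^ 2 + ‖GBi i a b - GBi i a' b'‖ ^ 2 ≤
        Lg ^ 2 * (‖a - a'‖ ^ 2 + ‖b - b'‖ ^ 2))
    (GB : HA → HB → HB)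
    (hGB : ∀ a b, HasFDerivAt (fun b' => (N : ℝ)⁻¹ * ∑ i, Li i a b')
      (innerSL ℝ (GB a b)) b)
    {Lsm : ℝ} (hLsm : 0 < Lsm)
    (hGBlip : ∀ a b b', ‖GB a b - GB a b'‖ ≤ Lsm * ‖b - b'‖)
    {η : ℝ} (hη0 : 0 < η) (hη : η ≤ 1 / Lsm)
    (a : Fin N → HA) (b : Fin N → HB)
    (abar : HA) (bbar : HB) (g : HB)
    (habar : abar = (N : ℝ)⁻¹ • ∑ i, a i) (hbbar : bbar = (N : ℝ)⁻¹ • ∑ i, b i)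
    (hg : g = (N : ℝ)⁻¹ • ∑ i, GBi i (a i) (b i)) :
    (N : ℝ)⁻¹ * ∑ i, Li i abar (bbar - η • g) ≤
      (N : ℝ)⁻¹ * ∑ i, Li i abar bbar - η / 2 * ‖GB abar bbar‖ ^ 2 +
        η * Lg ^ 2 / (2 * N) * ∑ i, (‖a i - abar‖ ^ 2 + ‖b i - bbar‖ ^ 2) := by
  have hNpos : (0 : ℝ) < N := by exact_mod_cast hN
  -- partial derivative of each Li in the second variable
  have hpb : ∀ i (a0 : HA) (b0 : HB),
      HasFDerivAt (fun b' => Li i a0 b') (innerSL ℝ (GBi i a0 b0)) b0 := by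
    intro i a0 b0
    have h := (hderiv i a0 b0).comp b0 (hasFDerivAt_prodMk_right a0 b0)
    have e : innerSL ℝ (GBi i a0 b0) = ((innerSL ℝ (GAi i a0 b0)).comp (ContinuousLinearMap.fst ℝ HA HB) +
        (innerSL ℝ (GBi i a0 b0)).comp (ContinuousLinearMap.snd ℝ HA HB)).comp
        (ContinuousLinearMap.inr ℝ HA HB) := by
      ext x
      simp
    rw [e]
    exact h
  -- GB agrees with the average of the GBi
  have hGBeq : ∀ b0 : HB, GB abar b0 = (N : ℝ)⁻¹ • ∑ i, GBi i abar b0 := by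
    intro b0
    have hsum : HasFDerivAt (fun b' => (N : ℝ)⁻¹ * ∑ i, Li i abar b')
        (innerSL ℝ ((N : ℝ)⁻¹ • ∑ i, GBi i abar b0)) b0 := by
      have h1 : HasFDerivAt (fun b' => ∑ i, Li i abar b')
          (∑ i, innerSL ℝ (GBi i abar b0)) b0 :=
        HasFDerivAt.fun_sum fun i _ => hpb i abar b0
      have h2 := h1.const_mul ((N : ℝ)⁻¹)
      rw [map_smul, map_sum]
      exact h2
    have huniq := (hGB abar b0).unique hsum
    have h3 : ∀ z : HB, ⟪GB abar b0, z⟫ = ⟪(N : ℝ)⁻¹ • ∑ i, GBi i abar b0, z⟫ := by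
      intro z
      have := congrArg (fun T : HB →L[ℝ] ℝ => T z) huniq
      simpa [sum_inner, real_inner_smul_left] using this
    have h4 : ⟪GB abar b0 - (N : ℝ)⁻¹ • ∑ i, GBi i abar b0,
        GB abar b0 - (N : ℝ)⁻¹ • ∑ i, GBi i abar b0⟫ = 0 := by
      rw [inner_sub_left, h3, sub_self]
    rw [← sub_eq_zero]
    exact inner_self_eq_zero.mp h4
  -- descent step
  have hdes := descent_aux (fun b' => (N : ℝ)⁻¹ * ∑ i, Li i abar b') (GB abar)
    (fun y => hGB abar y) (fun y y' => hGBlip abar y y') bbar (-(η • g))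
  rw [← sub_eq_add_neg] at hdes
  have hip : ⟪GB abar bbar, -(η • g)⟫ = -(η * ⟪GB abar bbar, g⟫) := by
    rw [inner_neg_right, real_inner_smul_right]
  have hnv : ‖-(η • g)‖ ^ 2 = η ^ 2 * ‖g‖ ^ 2 := by
    rw [norm_neg, norm_smul, Real.norm_eq_abs, mul_pow, sq_abs]
  rw [hip, hnv] at hdes
  -- bound ‖GB abar bbar - g‖²
  have hbound : ‖GB abar bbar - g‖ ^ 2 ≤
      (N : ℝ)⁻¹ * (Lg ^ 2 * ∑ i, (‖a i - abar‖ ^ 2 + ‖b i - bbar‖ ^ 2)) := by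
    have hdiff : GB abar bbar - g
        = (N : ℝ)⁻¹ • ∑ i, (GBi i abar bbar - GBi i (a i) (b i)) := by
      rw [hGBeq bbar, hg, ← smul_sub, ← Finset.sum_sub_distrib]
    have hsumsq : ‖∑ i, (GBi i abar bbar - GBi i (a i) (b i))‖ ^ 2 ≤
        (N : ℝ) * ∑ i, ‖GBi i abar bbar - GBi i (a i) (b i)‖ ^ 2 := by
      calc ‖∑ i, (GBi i abar bbar - GBi i (a i) (b i))‖ ^ 2
          ≤ (∑ i, ‖GBi i abar bbar - GBi i (a i) (b i)‖) ^ 2 := by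
            apply pow_le_pow_left₀ (norm_nonneg _) (norm_sum_le _ _)
        _ ≤ ((Finset.univ (α := Fin N)).card : ℝ) * ∑ i, ‖GBi i abar bbar - GBi i (a i) (b i)‖ ^ 2 :=
            sq_sum_le_card_mul_sum_sq
        _ = (N : ℝ) * ∑ i, ‖GBi i abar bbar - GBi i (a i) (b i)‖ ^ 2 := by
            simp
    have hterm : ∀ i, ‖GBi i abar bbar - GBi i (a i) (b i)‖ ^ 2 ≤
        Lg ^ 2 * (‖a i - abar‖ ^ 2 + ‖b i - bbar‖ ^ 2) := by
      intro i
      have h := hlip i abar bbar (a i) (b i)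
      have := sq_nonneg ‖GAi i abar bbar - GAi i (a i) (b i)‖
      rw [norm_sub_rev (abar) (a i), norm_sub_rev (bbar) (b i)] at h
      linarith
    calc ‖GB abar bbar - g‖ ^ 2
        = ((N : ℝ)⁻¹) ^ 2 * ‖∑ i, (GBi i abar bbar - GBi i (a i) (b i))‖ ^ 2 := by
          rw [hdiff, norm_smul, Real.norm_eq_abs, abs_of_pos (by positivity), mul_pow]
      _ ≤ ((N : ℝ)⁻¹) ^ 2 * ((N : ℝ) * ∑ i, ‖GBi i abar bbar - GBi i (a i) (b i)‖ ^ 2) := by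
          apply mul_le_mul_of_nonneg_left hsumsq (by positivity)
      _ ≤ ((N : ℝ)⁻¹) ^ 2 * ((N : ℝ) * ∑ i, Lg ^ 2 * (‖a i - abar‖ ^ 2 + ‖b i - bbar‖ ^ 2)) := by
          apply mul_le_mul_of_nonneg_left _ (by positivity)
          apply mul_le_mul_of_nonneg_left (Finset.sum_le_sum fun i _ => hterm i) hNpos.le
      _ = (N : ℝ)⁻¹ * (Lg ^ 2 * ∑ i, (‖a i - abar‖ ^ 2 + ‖b i - bbar‖ ^ 2)) := by
          rw [← Finset.mul_sum]; field_simp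
  -- assemble
  have hLη : Lsm * η ≤ 1 := by
    rw [le_div_iff₀ hLsm] at hη
    linarith [hη]
  have hid : ‖GB abar bbar - g‖ ^ 2
      = ‖GB abar bbar‖ ^ 2 - 2 * ⟪GB abar bbar, g⟫ + ‖g‖ ^ 2 := norm_sub_sq_real _ _
  have hsum_nonneg : (0 : ℝ) ≤ ∑ i, (‖a i - abar‖ ^ 2 + ‖b i - bbar‖ ^ 2) := by positivity
  have hfinal : η * Lg ^ 2 / (2 * N) * ∑ i, (‖a i - abar‖ ^ 2 + ‖b i - bbar‖ ^ 2)
      = η / 2 * ((N : ℝ)⁻¹ * (Lg ^ 2 * ∑ i, (‖a i - abar‖ ^ 2 + ‖b i - bbar‖ ^ 2))) := by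
    field_simp
  rw [hfinal]
  have hgsq : Lsm / 2 * (η ^ 2 * ‖g‖ ^ 2) ≤ η / 2 * ‖g‖ ^ 2 := by
    nlinarith [sq_nonneg ‖g‖, hη0.le]
  have hb2 : η / 2 * ‖GB abar bbar - g‖ ^ 2 ≤
      η / 2 * ((N : ℝ)⁻¹ * (Lg ^ 2 * ∑ i, (‖a i - abar‖ ^ 2 + ‖b i - bbar‖ ^ 2))) :=
    mul_le_mul_of_nonneg_left hbound (by positivity)
  simp only [← sub_eq_add_neg] at hdes
  have hid2 : η / 2 * ‖GB abar bbar - g‖ ^ 2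
      = η / 2 * (‖GB abar bbar‖ ^ 2 - 2 * ⟪GB abar bbar, g⟫ + ‖g‖ ^ 2) := by rw [hid]
  linarith [hdes, hb2, hgsq, hid2]
end

section
/- Let H_A and H_B be real inner product spaces and f : H_A × H_B → ℝ differentiable and bounded below by L* ∈ ℝ. Assume there is L > 0 such that for every fixed a ∈ H_A the map b ↦ f(a,b) has an L-Lipschitz gradient, and for every fixed b ∈ H_B the map a ↦ f(a,b) has an L-Lipschitz gradient. Let 0 < η ≤ 1/L, and let T ≥ 1 and K ≥ 1. Define iterates (aᵗ, bᵗ) from an arbitrary initial point (a⁰, b⁰) by the alternating schedule: if ⌊t/T⌋ is even (B-phase), set b^{t+1} = bᵗ − η·∇_b f(aᵗ, bᵗ) and a^{t+1} = aᵗ; if ⌊t/T⌋ is odd (A-phase), set a^{t+1} = aᵗ − η·∇_a f(aᵗ, bᵗ) and b^{t+1} = bᵗ. Define gₜ = ‖∇_b f(aᵗ, bᵗ)‖² in a B-phase step and gₜ = ‖∇_a f(aᵗ, bᵗ)‖² in an A-phase step. Then min_{0 ≤ t < 2KT} gₜ ≤ 2·(f(a⁰, b⁰) − L*)/(η·2KT).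 (Paper's Theorem 2: convergence of alternating LoRA updates in centralized federated learning at the O(1/(TK)) rate.) -/
open scoped BigOperators
open intervalIntegral

/-- Descent lemma: if `f` has gradient `G` everywhere and `G` is `L`-Lipschitz,
then `f (x + v) ≤ f x + ⟪G x, v⟫ + L/2 ‖v‖²`. -/
lemma descent_lemma {H : Type*} [NormedAddCommGroup H] [InnerProductSpace ℝ H]
    (f : H → ℝ) (G : H → H) {L : ℝ} (hL : 0 ≤ L)
    (hG : ∀ x, HasFDerivAt f (innerSL ℝ (G x)) x)
    (hLip : ∀ x y, ‖G x - G y‖ ≤ L * ‖x - y‖) (x v : H) :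
    f (x + v) ≤ f x + inner ℝ (G x) v + L / 2 * ‖v‖ ^ 2 := by
  set φ : ℝ → ℝ := fun s => f (x + s • v) with hφ
  have hline : ∀ s : ℝ, HasDerivAt (fun s : ℝ => x + s • v) v s := fun s => by
    simpa using ((hasDerivAt_id s).smul_const v).const_add x
  have hderiv : ∀ s : ℝ, HasDerivAt φ (inner ℝ (G (x + s • v)) v) s := fun s => by
    have := (hG (x + s • v)).comp_hasDerivAt s (hline s)
    exact this
  have hGcont : Continuous G := by
    have : LipschitzWith ⟨L, hL⟩ G := LipschitzWith.of_dist_le_mul (fun p q => by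
      rw [dist_eq_norm, dist_eq_norm]; exact hLip p q)
    exact this.continuous
  have hcont : Continuous fun s : ℝ => (inner ℝ (G (x + s • v)) v : ℝ) := by
    exact (continuous_inner.comp ((hGcont.comp (by continuity)).prodMk continuous_const))
  have hint : f (x + v) - f x = ∫ s in (0:ℝ)..1, inner ℝ (G (x + s • v)) v := by
    have := intervalIntegral.integral_eq_sub_of_hasDerivAt
      (fun s _ => hderiv s) (hcont.intervalIntegrable 0 1)
    simpa [φ] using this.symm
  have hbound : ∀ s ∈ Set.Icc (0:ℝ) 1,
      (inner ℝ (G (x + s • v)) v : ℝ) ≤ inner ℝ (G x) v + L * s * ‖v‖ ^ 2 := by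
    intro s hs
    have h1 : (inner ℝ (G (x + s • v)) v : ℝ) - inner ℝ (G x) v
        = inner ℝ (G (x + s • v) - G x) v := by rw [inner_sub_left]
    have h2 : (inner ℝ (G (x + s • v) - G x) v : ℝ) ≤ ‖G (x + s • v) - G x‖ * ‖v‖ :=
      real_inner_le_norm _ _
    have h3 : ‖G (x + s • v) - G x‖ ≤ L * (s * ‖v‖) := by
      have := hLip (x + s • v) x
      simpa [norm_smul, abs_of_nonneg hs.1] using this
    nlinarith [norm_nonneg v, mul_le_mul_of_nonneg_right h3 (norm_nonneg v)]
  have hIle : (∫ s in (0:ℝ)..1, (inner ℝ (G (x + s • v)) v : ℝ))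
      ≤ ∫ s in (0:ℝ)..1, (inner ℝ (G x) v + L * s * ‖v‖ ^ 2 : ℝ) := by
    apply intervalIntegral.integral_mono_on (by norm_num)
      (hcont.intervalIntegrable 0 1)
      ((by continuity : Continuous fun s : ℝ => (inner ℝ (G x) v + L * s * ‖v‖ ^ 2 : ℝ)).intervalIntegrable 0 1)
    exact hbound
  have hval : (∫ s in (0:ℝ)..1, (inner ℝ (G x) v + L * s * ‖v‖ ^ 2 : ℝ))
      = inner ℝ (G x) v + L / 2 * ‖v‖ ^ 2 := by
    have h1 : IntervalIntegrable (fun _ : ℝ => (inner ℝ (G x) v : ℝ)) MeasureTheory.volume 0 1 :=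
      intervalIntegrable_const
    have h2 : IntervalIntegrable (fun s : ℝ => L * s * ‖v‖ ^ 2) MeasureTheory.volume 0 1 :=
      (by continuity : Continuous fun s : ℝ => L * s * ‖v‖ ^ 2).intervalIntegrable 0 1
    rw [intervalIntegral.integral_add h1 h2]
    have : (∫ s in (0:ℝ)..1, L * s * ‖v‖ ^ 2) = L / 2 * ‖v‖ ^ 2 := by
      have : (fun s : ℝ => L * s * ‖v‖ ^ 2) = fun s : ℝ => (L * ‖v‖ ^ 2) * s := by
        funext s; ring
      rw [this, intervalIntegral.integral_const_mul, integral_id]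
      ring
    rw [this]
    simp
  linarith [hint, hIle.trans_eq hval]

lemma step_descent {H : Type*} [NormedAddCommGroup H] [InnerProductSpace ℝ H]
    (F : H → ℝ) (G : H → H) {L η : ℝ} (hL : 0 < L) (hη0 : 0 < η) (hηL : η * L ≤ 1)
    (hGd : ∀ x, HasFDerivAt F (innerSL ℝ (G x)) x)
    (hGl : ∀ x y, ‖G x - G y‖ ≤ L * ‖x - y‖) (x : H) :
    F (x - η • G x) ≤ F x - η / 2 * ‖G x‖ ^ 2 := by
  have := descent_lemma F G hL.le hGd hGl x (-(η • G x))
  have hin : (inner ℝ (G x) (-(η • G x)) : ℝ) = -(η * ‖G x‖ ^ 2) := by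
    rw [inner_neg_right, real_inner_smul_right, real_inner_self_eq_norm_sq]
  have hnv : ‖-(η • G x)‖ ^ 2 = η ^ 2 * ‖G x‖ ^ 2 := by
    rw [norm_neg, norm_smul, Real.norm_eq_abs, abs_of_pos hη0, mul_pow]
  rw [hin, hnv] at this
  have hsq : 0 ≤ ‖G x‖ ^ 2 := by positivity
  have h2 : F (x + -(η • G x)) ≤ F x - η / 2 * ‖G x‖ ^ 2 := by nlinarith
  simpa [sub_eq_add_neg] using h2


/-- Theorem 2 (centralized alternating LoRA convergence): under block-wise
`L`-smoothness, alternating gradient updates of the two blocks (switching every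
`T` steps) with step size `0 < η ≤ 1/L` drive the minimal squared active-block
gradient norm over `2KT` steps below `2(f(a⁰,b⁰) - L*)/(η·2KT)`. -/
theorem centralized_alternating_convergence
    {HA HB : Type*} [NormedAddCommGroup HA] [InnerProductSpace ℝ HA]
    [NormedAddCommGroup HB] [InnerProductSpace ℝ HB]
    (f : HA → HB → ℝ) (Lstar : ℝ) (hbdd : ∀ a b, Lstar ≤ f a b)
    (Ga : HA → HB → HA) (Gb : HA → HB → HB)
    (hGa : ∀ a b, HasFDerivAt (fun a' => f a' b) (innerSL ℝ (Ga a b)) a)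
    (hGb : ∀ a b, HasFDerivAt (fun b' => f a b') (innerSL ℝ (Gb a b)) b)
    {L : ℝ} (hL : 0 < L)
    (hGaLip : ∀ b a a', ‖Ga a b - Ga a' b‖ ≤ L * ‖a - a'‖)
    (hGbLip : ∀ a b b', ‖Gb a b - Gb a b'‖ ≤ L * ‖b - b'‖)
    {η : ℝ} (hη0 : 0 < η) (hη : η ≤ 1 / L)
    {T K : ℕ} (hT : 1 ≤ T) (hK : 1 ≤ K)
    (a : ℕ → HA) (b : ℕ → HB)
    (hupd : ∀ t, if (t / T) % 2 = 0 then
        b (t + 1) = b t - η • Gb (a t) (b t) ∧ a (t + 1) = a t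
      else
        a (t + 1) = a t - η • Ga (a t) (b t) ∧ b (t + 1) = b t) :
    (Finset.range (2 * K * T)).inf'
        (Finset.nonempty_range_iff.mpr (by positivity))
        (fun t => if (t / T) % 2 = 0 then ‖Gb (a t) (b t)‖ ^ 2
          else ‖Ga (a t) (b t)‖ ^ 2) ≤
      2 * (f (a 0) (b 0) - Lstar) / (η * (2 * K * T)) := by
  have hηL : η * L ≤ 1 := by
    rw [div_eq_mul_inv, one_mul] at hη
    calc η * L ≤ L⁻¹ * L := by nlinarith
    _ = 1 := inv_mul_cancel₀ hL.ne'
  set g : ℕ → ℝ := fun t => if (t / T) % 2 = 0 then ‖Gb (a t) (b t)‖ ^ 2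
      else ‖Ga (a t) (b t)‖ ^ 2 with hg
  -- one-step descent
  have hstep : ∀ t, f (a (t+1)) (b (t+1)) ≤ f (a t) (b t) - η / 2 * g t := by
    intro t
    rcases Nat.eq_zero_or_pos ((t / T) % 2) with h | h
    · have hu := hupd t
      rw [if_pos h] at hu
      have hgt : g t = ‖Gb (a t) (b t)‖ ^ 2 := by simp [hg, h]
      rw [hu.2, hu.1, hgt]
      exact step_descent (f (a t)) (Gb (a t)) hL hη0 hηL (hGb (a t)) (hGbLip (a t)) (b t)
    · have h' : (t / T) % 2 ≠ 0 := h.ne'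
      have hu := hupd t
      rw [if_neg h'] at hu
      have hgt : g t = ‖Ga (a t) (b t)‖ ^ 2 := by simp [hg, h']
      rw [hu.2, hu.1, hgt]
      exact step_descent (fun a' => f a' (b t)) (fun a' => Ga a' (b t)) hL hη0 hηL
        (fun a' => hGa a' (b t)) (fun x y => hGaLip (b t) x y) (a t)
  -- telescoping
  have hsum : ∀ N : ℕ, η / 2 * ∑ t ∈ Finset.range N, g t ≤ f (a 0) (b 0) - f (a N) (b N) := by
    intro N
    induction N with
    | zero => simp
    | succ n ih =>
      rw [Finset.sum_range_succ, mul_add]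
      have := hstep n
      linarith
  set N := 2 * K * T with hN
  have hNpos : 0 < N := by positivity
  have hNe : (Finset.range N).Nonempty := Finset.nonempty_range_iff.mpr hNpos.ne'
  have hmin : (N : ℝ) * (Finset.range N).inf' hNe g ≤ ∑ t ∈ Finset.range N, g t := by
    calc (N : ℝ) * (Finset.range N).inf' hNe g
        = ∑ _t ∈ Finset.range N, (Finset.range N).inf' hNe g := by
          rw [Finset.sum_const, Finset.card_range, nsmul_eq_mul]
      _ ≤ ∑ t ∈ Finset.range N, g t :=
          Finset.sum_le_sum fun t ht => Finset.inf'_le g ht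
  have hbig : η / 2 * ((N : ℝ) * (Finset.range N).inf' hNe g) ≤ f (a 0) (b 0) - Lstar := by
    have h1 := hsum N
    have h2 := hbdd (a N) (b N)
    nlinarith [mul_le_mul_of_nonneg_left hmin (by positivity : (0:ℝ) ≤ η / 2)]
  have hNr : (0:ℝ) < (N : ℝ) := by exact_mod_cast hNpos
  have hNcast : ((2 * K * T : ℕ) : ℝ) = 2 * (K : ℝ) * (T : ℝ) := by push_cast; ring
  rw [le_div_iff₀ (by positivity : (0:ℝ) < η * (2 * (K:ℝ) * (T:ℝ)))]
  calc (Finset.range N).inf' hNe g * (η * (2 * (K:ℝ) * (T:ℝ)))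
      = η / 2 * ((N:ℝ) * (Finset.range N).inf' hNe g) * 2 := by
        have hNR : (N : ℝ) = 2 * (K:ℝ) * (T:ℝ) := by rw [hN]; push_cast; ring
        rw [hNR]; ring
    _ ≤ (f (a 0) (b 0) - Lstar) * 2 := by linarith
    _ = 2 * (f (a 0) (b 0) - Lstar) := by ring
end
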